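/- arXiv:1007.3292 — 5 statements merged into one kernel-verified Lean document; each statement's English description precedes it below -/
import Mathlib

section
/- Let α, β, γ be finite nonempty types. Let p be a probability mass function on α and let K : α → (probability mass functions on β) and L : β → (probability mass functions on γ) be transition kernels, so that (A, B, C) forms a Markov chain with A ~ p, B ~ K(A), C ~ L(B). Let q(b) = Σ_a p(a)·K(a)(b) be the marginal of B and r(c) = Σ_b q(b)·L(b)(c) be the marginal of C. Then for every a ∈ α: Σ_c |(Σ_b K(a)(b)·L(b)(c)) − r(c)| ≤ (Σ_b |K(a)(b) − q(b)|) · max_{b ∈ β} Σ_c |L(b)(c) − r(c)|. (Here Σ_b K(a)(b)·L(b)(c) is the conditional distribution of C given A = a.) -/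
/-!
The signed weights `K a b - q b` sum to zero, since `K a` and the marginal `q` are both
probability vectors. Hence recentring each `L b` at `r` does not change
`∑ b, (K a b - q b) * L b c`, which is exactly the difference of the two laws of `C`; the
triangle inequality then bounds its `ℓ¹` norm by `∑ b, |K a b - q b|` times the largest
`∑ c, |L b c - r c|`.
-/

open Finset

section WeightedSums

variable {β γ : Type*} [Fintype β] [Fintype γ]

theorem sum_sum_mul_eq_sum_of_sum_eq_one {α : Type*} [Fintype α]
    (p : α → ℝ) (K : α → β → ℝ) (hKs : ∀ a, ∑ b, K a b = 1) :
    ∑ b, ∑ a, p a * K a b = ∑ a, p a := by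
  rw [sum_comm]
  simp_rw [← mul_sum, hKs, mul_one]

theorem sum_mul_sub_eq_sum_mul_of_sum_eq_zero (w : β → ℝ) (hw : ∑ b, w b = 0)
    (f : β → ℝ) (x : ℝ) :
    ∑ b, w b * (f b - x) = ∑ b, w b * f b := by
  simp_rw [mul_sub, sum_sub_distrib, ← sum_mul, hw, zero_mul, sub_zero]

theorem sum_abs_sum_mul_le_sum_abs_mul_sum_abs (w : β → ℝ) (g : β → γ → ℝ) :
    ∑ c, |∑ b, w b * g b c| ≤ ∑ b, |w b| * ∑ c, |g b c| :=
  calc ∑ c, |∑ b, w b * g b c|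
      ≤ ∑ c, ∑ b, |w b| * |g b c| :=
        sum_le_sum fun c _ => (abs_sum_le_sum_abs _ _).trans_eq (by simp_rw [abs_mul])
    _ = ∑ b, |w b| * ∑ c, |g b c| := by
        rw [sum_comm]
        simp_rw [mul_sum]

theorem sum_abs_sum_mul_le_sum_abs_mul_sup' [Nonempty β] (w : β → ℝ) (g : β → γ → ℝ) :
    ∑ c, |∑ b, w b * g b c| ≤
      (∑ b, |w b|) * univ.sup' univ_nonempty fun b => ∑ c, |g b c| := by
  refine (sum_abs_sum_mul_le_sum_abs_mul_sum_abs w g).trans ?_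
  rw [sum_mul]
  exact sum_le_sum fun b hb =>
    mul_le_mul_of_nonneg_left (le_sup' (fun b => ∑ c, |g b c|) hb) (abs_nonneg _)

end WeightedSums

theorem markov_chain_tv_serial_general
    {α β γ : Type*} [Fintype α] [Fintype β] [Fintype γ]
    [Nonempty β]
    (p : α → ℝ) (K : α → β → ℝ) (L : β → γ → ℝ)
    (hps : ∑ a, p a = 1)
    (hKs : ∀ a, ∑ b, K a b = 1)
    (q : β → ℝ) (hq : ∀ b, q b = ∑ a, p a * K a b)
    (r : γ → ℝ) (hr : ∀ c, r c = ∑ b, q b * L b c)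
    (a : α) :
    ∑ c, |(∑ b, K a b * L b c) - r c| ≤
      (∑ b, |K a b - q b|) *
        (Finset.univ.sup' Finset.univ_nonempty fun b => ∑ c, |L b c - r c|) := by
  have hqs : ∑ b, q b = 1 := by
    simp_rw [hq, sum_sum_mul_eq_sum_of_sum_eq_one p K hKs, hps]
  have hw : ∑ b, (K a b - q b) = 0 := by
    rw [sum_sub_distrib, hKs, hqs, sub_self]
  have hdiff : ∀ c, (∑ b, K a b * L b c) - r c = ∑ b, (K a b - q b) * (L b c - r c) := by
    intro c
    rw [sum_mul_sub_eq_sum_mul_of_sum_eq_zero _ hw, hr]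
    simp_rw [sub_mul, sum_sub_distrib]
  simp_rw [hdiff]
  exact sum_abs_sum_mul_le_sum_abs_mul_sup' _ _

/-- Along a Markov chain `A → B → C` with `A ~ p`, `B ~ K(A)`,
`C ~ L(B)`, for every `a` the TV distance of the conditional law of `C` given
`A = a` from the marginal of `C` is at most the TV distance of the conditional
law of `B` given `A = a` from the marginal of `B`, times the maximum over `b`
of the TV distance of `L(b)` from the marginal of `C`. -/
theorem markov_chain_tv_serial
    {α β γ : Type*} [Fintype α] [Fintype β] [Fintype γ]
    [Nonempty α] [Nonempty β] [Nonempty γ]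
    (p : α → ℝ) (K : α → β → ℝ) (L : β → γ → ℝ)
    (hp : ∀ a, 0 ≤ p a) (hps : ∑ a, p a = 1)
    (hK : ∀ a b, 0 ≤ K a b) (hKs : ∀ a, ∑ b, K a b = 1)
    (hL : ∀ b c, 0 ≤ L b c) (hLs : ∀ b, ∑ c, L b c = 1)
    (q : β → ℝ) (hq : ∀ b, q b = ∑ a, p a * K a b)
    (r : γ → ℝ) (hr : ∀ c, r c = ∑ b, q b * L b c)
    (a : α) :
    ∑ c, |(∑ b, K a b * L b c) - r c| ≤
      (∑ b, |K a b - q b|) *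
        (Finset.univ.sup' Finset.univ_nonempty fun b => ∑ c, |L b c - r c|) :=
  markov_chain_tv_serial_general p K L hps hKs q hq r hr a
end

section
/- Let k ≥ 1 and let p₁, …, p_k ∈ [0, 1] be real numbers such that Π_{i=1}^k p_i + Π_{i=1}^k (1 − p_i) > 0. Define q = (Π_{i=1}^k p_i) / (Π_{i=1}^k p_i + Π_{i=1}^k (1 − p_i)). Then |q − 1/2| ≤ Σ_{i=1}^k |p_i − 1/2|. -/
/-!
Write the bias of a weight pair `(a, b)` as `s = (a - b) / (a + b) ∈ [-1, 1]`, so that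
`a / (a + b) - 1/2 = s / 2`. Multiplying two pairs coordinatewise combines their biases by the
`tanh` addition law `(s + t) / (1 + s t)`, and `|s + t| ≤ (1 + s t) (|s| + |t|)` on `[-1, 1]²`.
Hence bias is subadditive under the product, and the theorem follows by induction on the number of factors.
-/

open Finset

theorem abs_sub_le_one_sub_mul_mul_add {a b : ℝ} (ha0 : 0 ≤ a) (ha1 : a ≤ 1) (hb0 : 0 ≤ b)
    (hb1 : b ≤ 1) : |a - b| ≤ (1 - a * b) * (a + b) := by
  have hab := mul_nonneg ha0 hb0
  rw [abs_le]
  constructor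
  · nlinarith [mul_nonneg (mul_nonneg ha0 (sub_nonneg.2 hb1)) (by linarith : (0 : ℝ) ≤ 1 + b),
      mul_nonneg ha0 (sub_nonneg.2 hb1), mul_nonneg hab (sub_nonneg.2 ha1)]
  · nlinarith [mul_nonneg (mul_nonneg hb0 (sub_nonneg.2 ha1)) (by linarith : (0 : ℝ) ≤ 1 + a),
      mul_nonneg hb0 (sub_nonneg.2 ha1), mul_nonneg hab (sub_nonneg.2 hb1)]

theorem abs_add_le_one_add_mul_mul {s t : ℝ} (hs : |s| ≤ 1) (ht : |t| ≤ 1) :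
    |s + t| ≤ (1 + s * t) * (|s| + |t|) := by
  rcases le_total 0 s with hs0 | hs0 <;> rcases le_total 0 t with ht0 | ht0
  · rw [abs_of_nonneg hs0, abs_of_nonneg ht0, abs_of_nonneg (add_nonneg hs0 ht0)]
    nlinarith [mul_nonneg (mul_nonneg hs0 ht0) (add_nonneg hs0 ht0)]
  · rw [abs_of_nonneg hs0, abs_of_nonpos ht0] at *
    simpa [sub_eq_add_neg] using abs_sub_le_one_sub_mul_mul_add hs0 hs (neg_nonneg.2 ht0) ht
  · rw [abs_of_nonpos hs0, abs_of_nonneg ht0] at *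
    simpa [sub_eq_add_neg, add_comm, mul_comm] using
      abs_sub_le_one_sub_mul_mul_add ht0 ht (neg_nonneg.2 hs0) hs
  · rw [abs_of_nonpos hs0, abs_of_nonpos ht0, abs_of_nonpos (add_nonpos hs0 ht0)]
    nlinarith [mul_nonneg (mul_nonneg_of_nonpos_of_nonpos hs0 ht0)
      (neg_nonneg.2 (add_nonpos hs0 ht0))]

theorem abs_sub_div_add_le_one {a b : ℝ} (ha : 0 ≤ a) (hb : 0 ≤ b) :
    |(a - b) / (a + b)| ≤ 1 := by
  rw [abs_div, abs_of_nonneg (add_nonneg ha hb)]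
  exact div_le_one_of_le₀ (abs_sub_le_iff.2 ⟨by linarith, by linarith⟩) (add_nonneg ha hb)

theorem abs_mul_div_sub_half_le {a b c d : ℝ} (ha : 0 ≤ a) (hb : 0 ≤ b) (hc : 0 ≤ c)
    (hd : 0 ≤ d) (hpos : 0 < a * c + b * d) :
    |a * c / (a * c + b * d) - 1 / 2| ≤ |a / (a + b) - 1 / 2| + |c / (c + d) - 1 / 2| := by
  have hprod : 0 < (a + b) * (c + d) := by nlinarith [mul_nonneg ha hd, mul_nonneg hb hc]
  obtain ⟨hab, hcd⟩ : 0 < a + b ∧ 0 < c + d :=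
    (pos_and_pos_or_neg_and_neg_of_mul_pos hprod).resolve_right fun h => by linarith [h.1]
  set s := (a - b) / (a + b)
  set t := (c - d) / (c + d)
  have hst : 1 + s * t = 2 * (a * c + b * d) / ((a + b) * (c + d)) := by
    simp only [s, t]; field_simp; ring
  have hst_pos : 0 < 1 + s * t := hst ▸ div_pos (by linarith) hprod
  have hq : a * c / (a * c + b * d) - 1 / 2 = (s + t) / (1 + s * t) / 2 := by
    rw [hst]; simp only [s, t]; field_simp; ring
  have hx : a / (a + b) - 1 / 2 = s / 2 := by simp only [s]; field_simp; ring
  have hy : c / (c + d) - 1 / 2 = t / 2 := by simp only [t]; field_simp; ring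
  rw [hq, hx, hy]
  simp only [abs_div, abs_two, abs_of_pos hst_pos]
  rw [← add_div, div_le_div_iff_of_pos_right two_pos, div_le_iff₀ hst_pos, mul_comm]
  exact abs_add_le_one_add_mul_mul (abs_sub_div_add_le_one ha hb) (abs_sub_div_add_le_one hc hd)

theorem abs_prod_div_sub_half_le_sum {ι : Type*} (s : Finset ι) (p : ι → ℝ)
    (hp0 : ∀ i ∈ s, 0 ≤ p i) (hp1 : ∀ i ∈ s, p i ≤ 1)
    (hpos : 0 < (∏ i ∈ s, p i) + ∏ i ∈ s, (1 - p i)) :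
    |(∏ i ∈ s, p i) / ((∏ i ∈ s, p i) + ∏ i ∈ s, (1 - p i)) - 1 / 2|
      ≤ ∑ i ∈ s, |p i - 1 / 2| := by
  induction s using Finset.cons_induction with
  | empty => norm_num
  | cons j s hj ih =>
    simp only [forall_mem_cons] at hp0 hp1
    rw [prod_cons, prod_cons] at hpos ⊢
    rw [sum_cons]
    have hP : 0 ≤ ∏ i ∈ s, p i := prod_nonneg hp0.2
    have hQ : 0 ≤ ∏ i ∈ s, (1 - p i) := prod_nonneg fun i hi => sub_nonneg.2 (hp1.2 i hi)
    have hpos' : 0 < (∏ i ∈ s, p i) + ∏ i ∈ s, (1 - p i) := by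
      by_contra! h
      nlinarith [hp0.1, hp1.1]
    calc _ ≤ |p j / (p j + (1 - p j)) - 1 / 2|
            + |(∏ i ∈ s, p i) / ((∏ i ∈ s, p i) + ∏ i ∈ s, (1 - p i)) - 1 / 2| :=
          abs_mul_div_sub_half_le hp0.1 (sub_nonneg.2 hp1.1) hP hQ hpos
      _ ≤ |p j - 1 / 2| + ∑ i ∈ s, |p i - 1 / 2| := by
          rw [add_sub_cancel, div_one]
          exact add_le_add_right (ih hp0.2 hp1.2 hpos') _

theorem normalized_product_dist_from_half_general
    (k : ℕ) (p : Fin k → ℝ)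
    (hp0 : ∀ i, 0 ≤ p i) (hp1 : ∀ i, p i ≤ 1)
    (hpos : 0 < (∏ i, p i) + ∏ i, (1 - p i)) :
    |(∏ i, p i) / ((∏ i, p i) + ∏ i, (1 - p i)) - 1 / 2| ≤ ∑ i, |p i - 1 / 2| :=
  abs_prod_div_sub_half_le_sum univ p (fun i _ => hp0 i) (fun i _ => hp1 i) hpos

/-- For `p₁, …, p_k ∈ [0,1]` with
`∏ pᵢ + ∏ (1 − pᵢ) > 0`, the normalized product
`q = ∏ pᵢ / (∏ pᵢ + ∏ (1 − pᵢ))` satisfies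
`|q − 1/2| ≤ Σᵢ |pᵢ − 1/2|`. -/
theorem normalized_product_dist_from_half
    (k : ℕ) (hk : 1 ≤ k) (p : Fin k → ℝ)
    (hp0 : ∀ i, 0 ≤ p i) (hp1 : ∀ i, p i ≤ 1)
    (hpos : 0 < (∏ i, p i) + ∏ i, (1 - p i)) :
    |(∏ i, p i) / ((∏ i, p i) + ∏ i, (1 - p i)) - 1 / 2| ≤ ∑ i, |p i - 1 / 2| :=
  normalized_product_dist_from_half_general k p hp0 hp1 hpos
end

section
/- Let k ≥ 1, let P : {0,1}^k → {0,1} be a predicate, let V be a finite set with |V| = n, let ε > 0, and let (e_j)_{j<m} be a family of injective tuples e_j : Fin k → V with m > n·ln 2/(2ε²). Then there exist literal vectors b_0, …, b_{m−1} ∈ {0,1}^k such that in the resulting instance of CSP(P), every assignment a : V → {0,1} satisfies at most (|P^{−1}(1)|/2^k + ε)·m constraints; equivalently, any set of constraints whose removal leaves a satisfiable instance has size at least (|P^{−1}(0)|/2^k − ε)·m. -/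
/-!
For a fixed assignment `a`, the map `b ↦ (a ∘ e j + b j)_j` is a bijection of the literal
vectors, so for uniformly random literals the number of constraints satisfied by `a` is a sum of
`m` independent Bernoulli variables of mean `p = |P⁻¹(1)|/2^k`. By Hoeffding's inequality it
exceeds `(p + ε) m` for at most a fraction `exp (-2 ε² m)` of the literal vectors, and
`2^n exp (-2 ε² m) < 1` by the choice of `m`, so a union bound over the `2^n` assignments leaves
a good literal vector. If deleting `R` leaves the instance satisfied by `a`, then `a` satisfies
at least `m - |R|` constraints, which gives the second bound.
-/

open Real Finset MeasureTheory ProbabilityTheory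

/-- Hoeffding's lemma for the uniform distribution on a finite type. -/
theorem sum_exp_mul_le_of_mem_Icc {α : Type*} [Fintype α] [Nonempty α] (f : α → ℝ)
    (hf : ∀ x, f x ∈ Set.Icc 0 1) (t : ℝ) :
    ∑ x, exp (t * f x) ≤
      Fintype.card α * exp (t * (∑ x, f x) / Fintype.card α + t ^ 2 / 8) := by
  let _ : MeasurableSpace α := ⊤
  have : MeasurableSingletonClass α := ⟨fun _ => trivial⟩
  set N : ℝ := (Fintype.card α : ℝ)
  have hN : 0 < N := by positivity
  have hintegral : ∀ g : α → ℝ, ∫ x, g x ∂(uniformOn Set.univ) = N⁻¹ * ∑ x, g x := by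
    intro g
    rw [integral_fintype .of_finite, Finset.mul_sum]
    simp [Measure.real, uniformOn_univ, N]
  have hoeffding := (hasSubgaussianMGF_of_mem_Icc (μ := uniformOn Set.univ) (X := f)
    (measurable_of_countable f).aemeasurable (ae_of_all _ hf)).mgf_le t
  rw [mgf, hintegral, hintegral] at hoeffding
  have hcenter : ∑ x, exp (t * f x) =
      exp (t * (∑ x, f x) / N) * ∑ x, exp (t * (f x - N⁻¹ * ∑ x, f x)) := by
    rw [Finset.mul_sum]
    refine Finset.sum_congr rfl fun x _ => ?_
    rw [← exp_add]; congr 1; field_simp; ring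
  rw [hcenter, exp_add, mul_left_comm]
  gcongr
  rw [← inv_mul_le_iff₀ hN]
  refine hoeffding.trans_eq ?_
  norm_num
  ring_nf

theorem card_filter_lt_mul_exp_le_sum_exp {β : Type*} (s : Finset β) (g : β → ℝ) (θ : ℝ)
    {t : ℝ} (ht : 0 ≤ t) :
    #{x ∈ s | θ < g x} * exp (t * θ) ≤ ∑ x ∈ s, exp (t * g x) :=
  calc (#{x ∈ s | θ < g x} : ℝ) * exp (t * θ)
      ≤ ∑ x ∈ s with θ < g x, exp (t * g x) := by
        rw [← nsmul_eq_mul]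
        exact card_nsmul_le_sum _ _ _ fun x hx =>
          exp_le_exp.2 (mul_le_mul_of_nonneg_left (mem_filter.1 hx).2.le ht)
    _ ≤ ∑ x ∈ s, exp (t * g x) :=
        sum_le_sum_of_subset_of_nonneg (filter_subset _ _) fun _ _ _ => (exp_pos _).le

/-- Hoeffding's inequality for `m` independent uniform samples from a finite type. -/
theorem card_filter_mean_add_lt_sum_le {α : Type*} [Fintype α] [Nonempty α] (f : α → ℝ)
    (hf : ∀ x, f x ∈ Set.Icc 0 1) {ε : ℝ} (hε : 0 ≤ ε) (m : ℕ) :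
    #{x : Fin m → α | ((∑ y, f y) / Fintype.card α + ε) * m < ∑ j, f (x j)} ≤
      (Fintype.card α : ℝ) ^ m * exp (-(2 * ε ^ 2 * m)) := by
  set N : ℝ := (Fintype.card α : ℝ)
  set q : ℝ := (∑ y, f y) / N
  -- `t = 4ε` minimises the Chernoff exponent `t ^ 2 / 8 - t ε`.
  have hmarkov := card_filter_lt_mul_exp_le_sum_exp univ (fun x : Fin m → α => ∑ j, f (x j))
    ((q + ε) * m) (by positivity : 0 ≤ 4 * ε)
  have hmgf : ∑ x : Fin m → α, exp (4 * ε * ∑ j, f (x j)) = (∑ y, exp (4 * ε * f y)) ^ m := by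
    simp_rw [Fintype.sum_pow, mul_sum, exp_sum]
  have hmgf_le : (∑ y, exp (4 * ε * f y)) ^ m ≤ (N * exp (4 * ε * q + 2 * ε ^ 2)) ^ m := by
    gcongr
    refine (sum_exp_mul_le_of_mem_Icc f hf _).trans_eq ?_
    congr 2; simp only [q]; ring
  have := (hmgf ▸ hmarkov).trans hmgf_le
  rw [mul_pow, ← exp_nat_mul, ← le_div_iff₀ (exp_pos _), mul_div_assoc, ← exp_sub] at this
  refine this.trans_eq ?_
  congr 2; ring

theorem exists_forall_not_of_sum_card_lt {ι β : Type*} [Fintype ι] [Fintype β]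
    (Q : ι → β → Prop) [∀ a, DecidablePred (Q a)]
    (h : ∑ a, #{b | Q a b} < Fintype.card β) : ∃ b, ∀ a, ¬ Q a b := by
  classical
  by_contra! hall
  refine h.not_ge ((card_le_card fun b _ => ?_).trans card_biUnion_le)
  obtain ⟨a, ha⟩ := hall b
  exact mem_biUnion.2 ⟨a, mem_univ _, mem_filter.2 ⟨mem_univ _, ha⟩⟩

theorem sub_card_le_card_filter {ι : Type*} [Fintype ι] (R : Finset ι) (Q : ι → Prop)
    [DecidablePred Q] (h : ∀ j, j ∉ R → Q j) :
    (Fintype.card ι : ℝ) - #R ≤ #{j | Q j} := by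
  classical
  rw [← Nat.cast_sub (card_le_univ R), ← card_compl]
  exact_mod_cast card_le_card fun j hj => mem_filter.2 ⟨mem_univ j, h j (mem_compl.1 hj)⟩

theorem card_filter_eq_zero_div_two_pow {k : ℕ} (P : (Fin k → ZMod 2) → ZMod 2) :
    (#{z | P z = 0} : ℝ) / 2 ^ k = 1 - #{z | P z = 1} / 2 ^ k := by
  have hzero : ∀ z, P z = 0 ↔ ¬ P z = 1 := fun z => by
    generalize P z = x; revert x; decide
  have hcard : (#{z | P z = 0} : ℝ) + #{z | P z = 1} = 2 ^ k := by
    simp_rw [hzero, add_comm _ (#{z | P z = 1} : ℝ)]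
    exact_mod_cast (card_filter_add_card_filter_not _).trans (by simp)
  rw [eq_sub_iff_add_eq, ← add_div, hcard, div_self (by positivity)]

theorem card_literals_many_satisfied_le {V : Type*} {k m : ℕ} (P : (Fin k → ZMod 2) → ZMod 2)
    (e : Fin m → Fin k → V) (a : V → ZMod 2) {ε : ℝ} (hε : 0 ≤ ε) :
    #{b : Fin m → Fin k → ZMod 2 | ((#{z | P z = 1} : ℝ) / 2 ^ k + ε) * m <
        #{j | P (fun i => a (e j i) + b j i) = 1}} ≤
      ((2 : ℝ) ^ k) ^ m * exp (-(2 * ε ^ 2 * m)) := by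
  set f : (Fin k → ZMod 2) → ℝ := fun z => if P z = 1 then 1 else 0
  have hf : ∀ z, f z ∈ Set.Icc 0 1 := fun z => by simp only [f]; split <;> norm_num
  have hcard : (Fintype.card (Fin k → ZMod 2) : ℝ) = 2 ^ k := by simp
  have hoeffding := card_filter_mean_add_lt_sum_le f hf hε m
  rw [hcard] at hoeffding
  refine le_of_eq_of_le ?_ hoeffding
  congr 1
  refine card_equiv (Equiv.piCongrRight fun j => Equiv.addLeft fun i => a (e j i)) fun b => ?_
  simp only [mem_filter, mem_univ, true_and, f, natCast_card_filter, Equiv.piCongrRight_apply,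
    Equiv.coe_addLeft]
  rfl

theorem two_pow_mul_exp_lt_one {n m : ℕ} {ε : ℝ} (hε : 0 < ε)
    (hm : (n : ℝ) * Real.log 2 / (2 * ε ^ 2) < m) :
    (2 : ℝ) ^ n * exp (-(2 * ε ^ 2 * m)) < 1 := by
  rw [div_lt_iff₀ (by positivity)] at hm
  rw [← exp_log (two_pos : (0 : ℝ) < 2), ← exp_nat_mul, exp_log two_pos, ← exp_add,
    exp_lt_one_iff]
  linarith

theorem exists_literals_forall_card_satisfied_le {k m n : ℕ} (P : (Fin k → ZMod 2) → ZMod 2)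
    {V : Type*} [Fintype V] (hn : Fintype.card V = n) {ε : ℝ} (hε : 0 < ε)
    (e : Fin m → Fin k → V) (hm : (n : ℝ) * Real.log 2 / (2 * ε ^ 2) < m) :
    ∃ b : Fin m → Fin k → ZMod 2, ∀ a : V → ZMod 2,
      (#{j | P (fun i => a (e j i) + b j i) = 1} : ℝ) ≤ (#{z | P z = 1} / 2 ^ k + ε) * m := by
  classical
  have hunion : ∑ a : V → ZMod 2, (#{b : Fin m → Fin k → ZMod 2 |
      ((#{z | P z = 1} : ℝ) / 2 ^ k + ε) * m < #{j | P (fun i => a (e j i) + b j i) = 1}} : ℝ) <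
      Fintype.card (Fin m → Fin k → ZMod 2) :=
    calc _ ≤ ∑ _a : V → ZMod 2, ((2 : ℝ) ^ k) ^ m * exp (-(2 * ε ^ 2 * m)) :=
          sum_le_sum fun a _ => card_literals_many_satisfied_le P e a hε.le
      _ = (2 : ℝ) ^ n * exp (-(2 * ε ^ 2 * m)) * ((2 : ℝ) ^ k) ^ m := by simp [hn]; ring
      _ < 1 * ((2 : ℝ) ^ k) ^ m := by gcongr; exact two_pow_mul_exp_lt_one hε hm
      _ = Fintype.card (Fin m → Fin k → ZMod 2) := by simp
  obtain ⟨b, hb⟩ := exists_forall_not_of_sum_card_lt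
    (fun (a : V → ZMod 2) (b : Fin m → Fin k → ZMod 2) =>
      ((#{z | P z = 1} : ℝ) / 2 ^ k + ε) * m < #{j | P (fun i => a (e j i) + b j i) = 1})
    (by exact_mod_cast hunion)
  exact ⟨b, fun a => not_lt.1 (hb a)⟩

theorem exists_far_instance_general
    (k : ℕ) (P : (Fin k → ZMod 2) → ZMod 2)
    {V : Type*} [Fintype V] (n : ℕ) (hn : Fintype.card V = n)
    (ε : ℝ) (hε : 0 < ε) (m : ℕ) (e : Fin m → Fin k → V)
    (hm : (n : ℝ) * Real.log 2 / (2 * ε ^ 2) < m) :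
    ∃ b : Fin m → Fin k → ZMod 2,
      (∀ a : V → ZMod 2,
        ((Finset.univ.filter (fun j : Fin m =>
            P (fun i => a (e j i) + b j i) = 1)).card : ℝ) ≤
          (((Finset.univ.filter (fun z : Fin k → ZMod 2 => P z = 1)).card : ℝ) / 2 ^ k + ε) * m) ∧
      (∀ R : Finset (Fin m),
        (∃ a : V → ZMod 2, ∀ j, j ∉ R → P (fun i => a (e j i) + b j i) = 1) →
          (((Finset.univ.filter (fun z : Fin k → ZMod 2 => P z = 0)).card : ℝ) / 2 ^ k - ε) * m
            ≤ (R.card : ℝ)) := by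
  obtain ⟨b, hb⟩ := exists_literals_forall_card_satisfied_le P hn hε e hm
  refine ⟨b, hb, fun R ⟨a, ha⟩ => ?_⟩
  have hremaining := sub_card_le_card_filter R _ ha
  rw [Fintype.card_fin] at hremaining
  rw [card_filter_eq_zero_div_two_pow]
  linarith [hb a]

/-- If `m > n·ln 2/(2ε²)` then there exist literal vectors
`b_0, …, b_{m−1} ∈ {0,1}^k` such that every assignment satisfies at most
`(|P⁻¹(1)|/2^k + ε)·m` constraints of the resulting CSP(P) instance;
equivalently, any set of constraints whose removal leaves a satisfiable
instance has size at least `(|P⁻¹(0)|/2^k − ε)·m`. -/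
theorem exists_far_instance
    (k : ℕ) (hk : 1 ≤ k) (P : (Fin k → ZMod 2) → ZMod 2)
    {V : Type*} [Fintype V] [DecidableEq V] (n : ℕ) (hn : Fintype.card V = n)
    (ε : ℝ) (hε : 0 < ε) (m : ℕ) (e : Fin m → Fin k → V)
    (hinj : ∀ j, Function.Injective (e j))
    (hm : (n : ℝ) * Real.log 2 / (2 * ε ^ 2) < m) :
    ∃ b : Fin m → Fin k → ZMod 2,
      (∀ a : V → ZMod 2,
        ((Finset.univ.filter (fun j : Fin m =>
            P (fun i => a (e j i) + b j i) = 1)).card : ℝ) ≤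
          (((Finset.univ.filter (fun z : Fin k → ZMod 2 => P z = 1)).card : ℝ) / 2 ^ k + ε) * m) ∧
      (∀ R : Finset (Fin m),
        (∃ a : V → ZMod 2, ∀ j, j ∉ R → P (fun i => a (e j i) + b j i) = 1) →
          (((Finset.univ.filter (fun z : Fin k → ZMod 2 => P z = 0)).card : ℝ) / 2 ^ k - ε) * m
            ≤ (R.card : ℝ)) :=
  exists_far_instance_general k P n hn ε hε m e hm
end

section
/- Let k ≥ 2 and let Φ be an instance of k-EQU over a variable set V with |V| = n in which each variable appears in at most d constraints. Let φ(Φ) be the instance of 2-EQU over the same variable set V obtained by replacing each constraint of Φ, whose literals are ℓ₁, …, ℓ_k, by the k(k−1)/2 constraints ℓ_i = ℓ_j for 1 ≤ i < j ≤ k. Then: (i) if Φ is satisfiable then φ(Φ) is satisfiable; (ii) if φ(Φ) can be made satisfiable by deleting some set of t of its constraints, then Φ can be made satisfiable by deleting at most t constraints; in particular, if every set of constraints of Φ whose removal leaves a satisfiable instance has size at least ε·d·n/k, then every set of constraints of φ(Φ) whose removal leaves a satisfiable instance has size at least ε·d·n/k. -/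
/-!
An assignment satisfying all literals of a constraint equal satisfies every pair of them, which
gives (i). Conversely, if an assignment satisfies every pair constraint outside a set `T`, then it
satisfies every constraint of `Φ` none of whose pairs lies in `T`, because equality of the literals
along all pairs `i < j` makes them all equal. Deleting the constraints of `Φ` that `T` comes from,
at most `|T|` of them, therefore leaves `Φ` satisfiable, which gives (ii) and the farness bound.
-/

theorem eq_of_forall_lt_imp_eq {ι β : Type*} [LinearOrder ι] {f : ι → β}
    (h : ∀ i i', i < i' → f i = f i') (i i' : ι) : f i = f i' := by
  obtain rfl | hne := eq_or_ne i i'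
  · rfl
  · exact (Std.Symm.pairwise_on (r := Eq) f).mpr (fun _ _ => h _ _) hne

theorem eq_of_notMem_image_fst {J ι β : Type*} [DecidableEq J] [LinearOrder ι]
    {ℓ : J → ι → β} {T : Finset (J × {p : ι × ι // p.1 < p.2})}
    (hT : ∀ c, c ∉ T → ℓ c.1 c.2.val.1 = ℓ c.1 c.2.val.2)
    (j : J) (hj : j ∉ T.image Prod.fst) (i i' : ι) : ℓ j i = ℓ j i' :=
  eq_of_forall_lt_imp_eq
    (fun i i' hlt => hT (j, ⟨(i, i'), hlt⟩) fun hmem => hj (Finset.mem_image_of_mem _ hmem)) i i'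

theorem kEQU_to_2EQU_reduction_general
    (k : ℕ)
    {V : Type*} (n : ℕ)
    (d : ℕ) (ε : ℝ)
    (m : ℕ) (e : Fin m → Fin k → V)
    (b : Fin m → Fin k → ZMod 2) :
    -- (i) satisfiability is preserved
    ((∃ a : V → ZMod 2, ∀ j : Fin m, ∀ i i' : Fin k,
        a (e j i) + b j i = a (e j i') + b j i') →
      ∃ a : V → ZMod 2, ∀ c : Fin m × {p : Fin k × Fin k // p.1 < p.2},
        a (e c.1 c.2.val.1) + b c.1 c.2.val.1 = a (e c.1 c.2.val.2) + b c.1 c.2.val.2) ∧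
    -- (ii) a deletion set for `φ(Φ)` yields one of at most the same size for `Φ`
    (∀ T : Finset (Fin m × {p : Fin k × Fin k // p.1 < p.2}),
      (∃ a : V → ZMod 2, ∀ c, c ∉ T →
          a (e c.1 c.2.val.1) + b c.1 c.2.val.1 = a (e c.1 c.2.val.2) + b c.1 c.2.val.2) →
      ∃ S : Finset (Fin m), S.card ≤ T.card ∧
        ∃ a : V → ZMod 2, ∀ j, j ∉ S → ∀ i i' : Fin k,
          a (e j i) + b j i = a (e j i') + b j i') ∧
    -- in particular, farness is preserved
    ((∀ S : Finset (Fin m),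
        (∃ a : V → ZMod 2, ∀ j, j ∉ S → ∀ i i' : Fin k,
          a (e j i) + b j i = a (e j i') + b j i') →
        ε * d * n / k ≤ (S.card : ℝ)) →
      ∀ T : Finset (Fin m × {p : Fin k × Fin k // p.1 < p.2}),
        (∃ a : V → ZMod 2, ∀ c, c ∉ T →
          a (e c.1 c.2.val.1) + b c.1 c.2.val.1 = a (e c.1 c.2.val.2) + b c.1 c.2.val.2) →
        ε * d * n / k ≤ (T.card : ℝ)) := by
  refine ⟨fun ⟨a, ha⟩ => ⟨a, fun c => ha _ _ _⟩,
    fun T ⟨a, ha⟩ => ⟨T.image Prod.fst, Finset.card_image_le, a, eq_of_notMem_image_fst ha⟩,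
    fun hfar T ⟨a, ha⟩ => ?_⟩
  calc ε * d * n / k ≤ ((T.image Prod.fst).card : ℝ) := hfar _ ⟨a, eq_of_notMem_image_fst ha⟩
    _ ≤ T.card := by exact_mod_cast Finset.card_image_le

/-- The reduction `φ` from `k`-EQU to `2`-EQU replacing each
constraint with literals `ℓ₁, …, ℓ_k` by the `k(k−1)/2` constraints
`ℓ_i = ℓ_j` (`i < j`) preserves satisfiability, and deleting `t` constraints of
`φ(Φ)` to reach satisfiability can be simulated by deleting at most `t`
constraints of `Φ`; in particular `(ε·d·n/k)`-farness is preserved.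
A `k`-EQU constraint with variables `e j` and literal vector `b j` is satisfied
by `a` iff all literals `a (e j i) + b j i` take the same value. -/
theorem kEQU_to_2EQU_reduction
    (k : ℕ) (hk : 2 ≤ k)
    {V : Type*} [Fintype V] [DecidableEq V] (n : ℕ) (hn : Fintype.card V = n)
    (d : ℕ) (ε : ℝ)
    (m : ℕ) (e : Fin m → Fin k → V) (hinj : ∀ j, Function.Injective (e j))
    (b : Fin m → Fin k → ZMod 2)
    -- each variable appears in at most `d` constraints of `Φ`
    (hdeg : ∀ v : V,
      (Finset.univ.filter (fun j : Fin m => ∃ i, e j i = v)).card ≤ d) :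
    -- (i) satisfiability is preserved
    ((∃ a : V → ZMod 2, ∀ j : Fin m, ∀ i i' : Fin k,
        a (e j i) + b j i = a (e j i') + b j i') →
      ∃ a : V → ZMod 2, ∀ c : Fin m × {p : Fin k × Fin k // p.1 < p.2},
        a (e c.1 c.2.val.1) + b c.1 c.2.val.1 = a (e c.1 c.2.val.2) + b c.1 c.2.val.2) ∧
    -- (ii) a deletion set for `φ(Φ)` yields one of at most the same size for `Φ`
    (∀ T : Finset (Fin m × {p : Fin k × Fin k // p.1 < p.2}),
      (∃ a : V → ZMod 2, ∀ c, c ∉ T →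
          a (e c.1 c.2.val.1) + b c.1 c.2.val.1 = a (e c.1 c.2.val.2) + b c.1 c.2.val.2) →
      ∃ S : Finset (Fin m), S.card ≤ T.card ∧
        ∃ a : V → ZMod 2, ∀ j, j ∉ S → ∀ i i' : Fin k,
          a (e j i) + b j i = a (e j i') + b j i') ∧
    -- in particular, farness is preserved
    ((∀ S : Finset (Fin m),
        (∃ a : V → ZMod 2, ∀ j, j ∉ S → ∀ i i' : Fin k,
          a (e j i) + b j i = a (e j i') + b j i') →
        ε * d * n / k ≤ (S.card : ℝ)) →
      ∀ T : Finset (Fin m × {p : Fin k × Fin k // p.1 < p.2}),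
        (∃ a : V → ZMod 2, ∀ c, c ∉ T →
          a (e c.1 c.2.val.1) + b c.1 c.2.val.1 = a (e c.1 c.2.val.2) + b c.1 c.2.val.2) →
        ε * d * n / k ≤ (T.card : ℝ)) :=
  kEQU_to_2EQU_reduction_general k n d ε m e b
end

section
/- Let k, h ≥ 1 and let A be an h × k matrix over F₂ such that every nonzero vector in the row space of A (i.e., every vᵀA with v ∈ F₂^h, v ≠ 0) has Hamming weight at least 3. Let H be a k-uniform hypergraph on a vertex set V with |V| = n, with edges given as injective tuples e : Fin k → V, and suppose H is a (γ, η)-expander with η < 1/2. For each edge e define the linear map L_e : (V → F₂) → F₂^h by L_e(x) = A · (x(e(1)), …, x(e(k)))ᵀ. Then for every set S of at most γ·n edges of H and every family of coefficient vectors (c_e)_{e ∈ S} with c_e ∈ F₂^h not all zero, the linear functional x ↦ Σ_{e ∈ S} c_eᵀ · L_e(x) on F₂^V is not identically zero; equivalently, the h·|S| rows of the stacked constraint matrix corresponding to the edges of S are linearly independent over F₂. -/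
/-!
Put `w j = c jᵀ A` for the edges `T` with `c j ≠ 0`; each `w j` has at least `3` nonzero
entries, so there are `N ≥ 3 |T|` incidences `(j, i)` with `w j i ≠ 0`. If the functional
vanished, testing it on the indicator of a vertex `v` shows that `v` cannot carry exactly one
such incidence, so they cover at most `N / 2` vertices, while the remaining `k |T| - N`
incidences cover at most that many more. Hence `T` spans at most `(k - 3/2) |T|` vertices,
against the expansion bound `(k - 1 - η) |T|` with `η < 1/2`.
-/

open Finset

theorem Finset.two_mul_card_image_le_card {α β : Type*} [DecidableEq β] (s : Finset α)
    (f : α → β) (hfiber : ∀ b, #{a ∈ s | f a = b} ≠ 1) : 2 * #(s.image f) ≤ #s := by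
  rw [card_eq_sum_card_image f s, mul_comm, ← smul_eq_mul]
  refine card_nsmul_le_sum _ _ _ fun b hb => ?_
  obtain ⟨a, ha, rfl⟩ := mem_image.1 hb
  have : 0 < #{x ∈ s | f x = f a} := card_pos.2 ⟨a, mem_filter.2 ⟨ha, rfl⟩⟩
  have := hfiber (f a)
  omega

section Incidences

variable {ι κ V R : Type*} [Fintype κ] [DecidableEq R]

def supportIncidences [Zero R] (T : Finset ι) (w : ι → κ → R) : Finset (ι × κ) :=
  {p ∈ T ×ˢ univ | w p.1 p.2 ≠ 0}

variable [DecidableEq V] (e : ι → κ → V) (T : Finset ι) (w : ι → κ → R)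

theorem card_supportIncidences [Zero R] :
    #(supportIncidences T w) = ∑ j ∈ T, #{i | w j i ≠ 0} := by
  simp only [supportIncidences, card_filter, sum_product]

theorem card_fiber_supportIncidences_ne_one [NonAssocSemiring R]
    (hzero : ∀ x : V → R, ∑ j ∈ T, ∑ i, w j i * x (e j i) = 0) (v : V) :
    #{p ∈ supportIncidences T w | e p.1 p.2 = v} ≠ 1 := by
  intro hone
  obtain ⟨p, hp⟩ := card_eq_one.1 hone
  have hpv := hzero fun u => if u = v then 1 else 0
  simp only [mul_ite, mul_one, mul_zero] at hpv
  rw [← sum_product' T (univ : Finset κ) fun j i => if e j i = v then w j i else 0,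
    ← sum_filter, ← sum_filter_ne_zero, filter_filter] at hpv
  have hsupp : {q ∈ T ×ˢ (univ : Finset κ) | e q.1 q.2 = v ∧ w q.1 q.2 ≠ 0} = {p} := by
    rw [← hp, supportIncidences, filter_filter]
    simp only [and_comm]
  rw [hsupp, sum_singleton] at hpv
  have hp_mem : p ∈ supportIncidences T w := (mem_filter.1 (hp ▸ mem_singleton_self p)).1
  exact (mem_filter.1 hp_mem).2 hpv

theorem card_biUnion_add_card_supportIncidences_le [Zero R] :
    #(T.biUnion fun j => univ.image (e j)) + #(supportIncidences T w) ≤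
      #((supportIncidences T w).image fun p => e p.1 p.2) + Fintype.card κ * #T := by
  set f : ι × κ → V := fun p => e p.1 p.2
  set Z : Finset (ι × κ) := {p ∈ T ×ˢ univ | ¬ w p.1 p.2 ≠ 0}
  have hcover : (T.biUnion fun j => univ.image (e j)) ⊆
      (supportIncidences T w).image f ∪ Z.image f := by
    intro v hv
    obtain ⟨j, hj, i, -, rfl⟩ : ∃ j ∈ T, ∃ i ∈ univ, e j i = v := by simpa using hv
    by_cases hw : w j i = 0
    · exact mem_union_right _ (mem_image_of_mem f (a := (j, i)) (by simp [Z, hj, hw]))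
    · exact mem_union_left _
        (mem_image_of_mem f (a := (j, i)) (by simp [supportIncidences, hj, hw]))
  have hsplit : #(supportIncidences T w) + #Z = Fintype.card κ * #T := by
    rw [supportIncidences, card_filter_add_card_filter_not, card_product, card_univ, mul_comm]
  calc #(T.biUnion fun j => univ.image (e j)) + #(supportIncidences T w)
      ≤ #((supportIncidences T w).image f) + #(Z.image f) + #(supportIncidences T w) := by
        gcongr
        exact (card_le_card hcover).trans (card_union_le _ _)
    _ ≤ #((supportIncidences T w).image f) + #Z + #(supportIncidences T w) := by
        gcongr
        exact card_image_le
    _ = _ := by omega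

theorem two_mul_card_biUnion_add_three_mul_card_le [NonAssocSemiring R]
    (hzero : ∀ x : V → R, ∑ j ∈ T, ∑ i, w j i * x (e j i) = 0)
    (hweight : ∀ j ∈ T, 3 ≤ #{i | w j i ≠ 0}) :
    2 * #(T.biUnion fun j => univ.image (e j)) + 3 * #T ≤ 2 * Fintype.card κ * #T := by
  have hvertices := card_biUnion_add_card_supportIncidences_le e T w
  have himage := (supportIncidences T w).two_mul_card_image_le_card (fun p => e p.1 p.2)
    (card_fiber_supportIncidences_ne_one e T w hzero)
  have hweight : 3 * #T ≤ #(supportIncidences T w) := by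
    rw [card_supportIncidences, mul_comm, ← smul_eq_mul]
    exact card_nsmul_le_sum _ _ _ hweight
  linarith

end Incidences

theorem hamming_code_expander_rows_independent_general
    (k h : ℕ)
    (A : Matrix (Fin h) (Fin k) (ZMod 2))
    (hdist : ∀ v : Fin h → ZMod 2, v ≠ 0 →
      3 ≤ (Finset.univ.filter (fun i : Fin k => Matrix.vecMul v A i ≠ 0)).card)
    {V : Type*} [DecidableEq V] (n : ℕ)
    (m : ℕ) (e : Fin m → Fin k → V)
    (γ η : ℝ) (hη : η < 1 / 2)
    (hexp : ∀ S : Finset (Fin m), (S.card : ℝ) ≤ γ * n →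
      ((k : ℝ) - 1 - η) * S.card ≤
        ((S.biUnion fun j => Finset.image (e j) Finset.univ).card : ℝ)) :
    ∀ S : Finset (Fin m), (S.card : ℝ) ≤ γ * n →
      ∀ c : Fin m → Fin h → ZMod 2, (∃ j ∈ S, c j ≠ 0) →
        ∃ x : V → ZMod 2,
          (∑ j ∈ S, ∑ r : Fin h, c j r * ∑ i : Fin k, A r i * x (e j i)) ≠ 0 := by
  intro S hS c ⟨j₀, hj₀S, hj₀⟩
  by_contra! hzero
  set T : Finset (Fin m) := {j ∈ S | c j ≠ 0}
  have hT : (1 : ℝ) ≤ #T := by exact_mod_cast card_pos.2 ⟨j₀, mem_filter.2 ⟨hj₀S, hj₀⟩⟩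
  have hzeroT (x : V → ZMod 2) : ∑ j ∈ T, ∑ i, Matrix.vecMul (c j) A i * x (e j i) = 0 := by
    calc ∑ j ∈ T, ∑ i, Matrix.vecMul (c j) A i * x (e j i)
        = ∑ j ∈ S, ∑ i, Matrix.vecMul (c j) A i * x (e j i) :=
          sum_filter_of_ne fun j _ hj hc => hj (by simp [hc])
      _ = ∑ j ∈ S, ∑ r, c j r * ∑ i, A r i * x (e j i) :=
          sum_congr rfl fun j _ => (Matrix.dotProduct_mulVec (c j) A _).symm
      _ = 0 := hzero x
  have hcount := two_mul_card_biUnion_add_three_mul_card_le e T _ hzeroT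
    fun j hj => hdist (c j) (mem_filter.1 hj).2
  have hexpT := hexp T ((Nat.cast_le.2 (card_filter_le S _)).trans hS)
  rw [Fintype.card_fin] at hcount
  have hcountR : 2 * (#(T.biUnion fun j => univ.image (e j)) : ℝ) + 3 * #T ≤ 2 * k * #T := by
    exact_mod_cast hcount
  linarith [mul_lt_mul_of_pos_right hη (by linarith : (0 : ℝ) < #T)]

/-- Let `A` be an `h × k` matrix over `F₂` every nonzero
row-space vector of which (i.e. `vᵀA` for `v ≠ 0`) has Hamming weight at least
`3`, and let `H` be a `k`-uniform `(γ, η)`-expander with `η < 1/2`, edges given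
as injective tuples `e j`. For each edge `j` and `x : V → F₂` consider the
linear constraints `A · (x(e j 1), …, x(e j k))ᵀ`. Then for every set `S` of
at most `γ·n` edges and coefficient vectors `c_j ∈ F₂^h` not all zero on `S`,
the linear functional `x ↦ Σ_{j ∈ S} c_jᵀ · A · x|_{e j}` is not identically
zero; i.e. the rows of the stacked constraint matrix over `S` are linearly
independent over `F₂`. -/
theorem hamming_code_expander_rows_independent
    (k h : ℕ) (hk : 1 ≤ k) (hh : 1 ≤ h)
    (A : Matrix (Fin h) (Fin k) (ZMod 2))
    (hdist : ∀ v : Fin h → ZMod 2, v ≠ 0 →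
      3 ≤ (Finset.univ.filter (fun i : Fin k => Matrix.vecMul v A i ≠ 0)).card)
    {V : Type*} [Fintype V] [DecidableEq V] (n : ℕ) (hn : Fintype.card V = n)
    (m : ℕ) (e : Fin m → Fin k → V) (hinj : ∀ j, Function.Injective (e j))
    (γ η : ℝ) (hγ : 0 < γ) (hη : η < 1 / 2)
    (hexp : ∀ S : Finset (Fin m), (S.card : ℝ) ≤ γ * n →
      ((k : ℝ) - 1 - η) * S.card ≤
        ((S.biUnion fun j => Finset.image (e j) Finset.univ).card : ℝ)) :
    ∀ S : Finset (Fin m), (S.card : ℝ) ≤ γ * n →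
      ∀ c : Fin m → Fin h → ZMod 2, (∃ j ∈ S, c j ≠ 0) →
        ∃ x : V → ZMod 2,
          (∑ j ∈ S, ∑ r : Fin h, c j r * ∑ i : Fin k, A r i * x (e j i)) ≠ 0 :=
  hamming_code_expander_rows_independent_general k h A hdist n m e γ η hη hexp
end
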